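/- arXiv:1701.03042 — 2 statements merged into one kernel-verified Lean document; each statement's English description precedes it below -/
import Mathlib

section
/- The second-order Krylov subspace G_m(A,B;u) = span{r_0, …, r_{m-1}} equals the projection onto the first n coordinates of the standard Krylov subspace K_m(H, ν) = span{ν, Hν, …, H^{m-1}ν}. -/
open Matrix

/- The companion matrix `H = [[A, B], [I, 0]]` advances a pair of consecutive terms of a
second-order recurrence by one step, so `H ^ j * [u; 0] = [r_j; r_{j-1}]` with `r_{-1} = 0`;
projecting onto the first block turns the Krylov vectors of `H` into the `r_j`. -/

theorem fromBlocks_mulVec_sum_elim {R ι : Type*} [Semiring R] [Fintype ι] [DecidableEq ι]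
    (A B : Matrix ι ι R) (x y : ι → R) :
    fromBlocks A B 1 0 *ᵥ Sum.elim x y = Sum.elim (A *ᵥ x + B *ᵥ y) x := by
  simp [fromBlocks_mulVec, Function.comp_def]

theorem fromBlocks_pow_mulVec_of_recurrence {R ι : Type*} [Semiring R] [Fintype ι]
    [DecidableEq ι] (A B : Matrix ι ι R) (s : ℕ → ι → R)
    (hs : ∀ j, s (j + 2) = A *ᵥ s (j + 1) + B *ᵥ s j) (j : ℕ) :
    (fromBlocks A B 1 0) ^ j *ᵥ Sum.elim (s 1) (s 0) = Sum.elim (s (j + 1)) (s j) := by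
  induction j with
  | zero => simp
  | succ k ih => rw [pow_succ', ← mulVec_mulVec, ih, fromBlocks_mulVec_sum_elim, ← hs]

theorem stmt1_general (n m : ℕ) (A B : Matrix (Fin n) (Fin n) ℂ) (u : Fin n → ℂ)
    (r : ℕ → Fin n → ℂ)
    (hr0 : r 0 = u) (hr1 : r 1 = A.mulVec u)
    (hr : ∀ j, 2 ≤ j → r j = A.mulVec (r (j - 1)) + B.mulVec (r (j - 2))) :
    Submodule.span ℂ (Set.range fun i : Fin m => r i)
      = Submodule.map (LinearMap.funLeft ℂ ℂ (Sum.inl : Fin n → Fin n ⊕ Fin n))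
          (Submodule.span ℂ (Set.range fun i : Fin m =>
            ((fromBlocks A B 1 0 : Matrix (Fin n ⊕ Fin n) (Fin n ⊕ Fin n) ℂ) ^ (i : ℕ)).mulVec
              (Sum.elim u 0))) := by
  let s : ℕ → Fin n → ℂ := fun j => if j = 0 then 0 else r (j - 1)
  have hs : ∀ j, s (j + 2) = A *ᵥ s (j + 1) + B *ᵥ s j := by
    rintro (_ | j)
    · simp [s, hr1, hr0]
    · simpa [s] using hr (j + 2) (by omega)
  have krylov (j : ℕ) : (fromBlocks A B 1 0) ^ j *ᵥ Sum.elim u 0 = Sum.elim (r j) (s j) := by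
    simpa [s, hr0] using fromBlocks_pow_mulVec_of_recurrence A B s hs j
  rw [Submodule.map_span, ← Set.range_comp]
  congr 1
  funext i
  simp only [krylov]
  rfl

/-- The second-order Krylov subspace G_m(A,B;u) = span{r_0,…,r_{m-1}} equals the projection
onto the first n coordinates of the standard Krylov subspace K_m(H,ν), where
H = [[A,B],[I,0]] and ν = [u;0]. -/
theorem stmt1 (n m : ℕ) (A B : Matrix (Fin n) (Fin n) ℂ) (u : Fin n → ℂ) (hu : u ≠ 0)
    (r : ℕ → Fin n → ℂ)
    (hr0 : r 0 = u) (hr1 : r 1 = A.mulVec u)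
    (hr : ∀ j, 2 ≤ j → r j = A.mulVec (r (j - 1)) + B.mulVec (r (j - 2))) :
    Submodule.span ℂ (Set.range fun i : Fin m => r i)
      = Submodule.map (LinearMap.funLeft ℂ ℂ (Sum.inl : Fin n → Fin n ⊕ Fin n))
          (Submodule.span ℂ (Set.range fun i : Fin m =>
            ((fromBlocks A B 1 0 : Matrix (Fin n ⊕ Fin n) (Fin n ⊕ Fin n) ℂ) ^ (i : ℕ)).mulVec
              (Sum.elim u 0))) :=
  stmt1_general n m A B u r hr0 hr1 hr
end

section
/- After applying p implicit shifted QR steps to an m-step decomposition, the vector b_m^T = e_m^T V_m has at most p+1 nonzero entries, all located in the last p+1 positions; equivalently, the first m−p−1 entries of e_m^T V_m are zero. -/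
/-!
Each factor `T - μ • 1` is upper Hessenberg, i.e. has lower bandwidth one, and lower bandwidths
add under multiplication, so the product of the `p` factors has lower bandwidth `p`. Since `R` is
invertible and upper triangular, so is `R⁻¹`, and `V = (T - μ₁)⋯(T - μ_p) R⁻¹` keeps lower
bandwidth `p`. Its last row therefore vanishes left of column `m - p - 1`.
-/

open Matrix

namespace Matrix

variable {m : ℕ} {α : Type*}

def HasLowerBandwidth [Zero α] (A : Matrix (Fin m) (Fin m) α) (b : ℕ) : Prop :=
  ∀ i j : Fin m, (j : ℕ) + b < i → A i j = 0

theorem hasLowerBandwidth_zero_iff_blockTriangular [Zero α] {A : Matrix (Fin m) (Fin m) α} :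
    A.HasLowerBandwidth 0 ↔ A.BlockTriangular id :=
  forall₂_congr fun _ _ => by rw [add_zero, id, id, Fin.lt_def]

theorem hasLowerBandwidth_one [Zero α] [One α] :
    (1 : Matrix (Fin m) (Fin m) α).HasLowerBandwidth 0 :=
  fun _ _ hij => one_apply_ne (Fin.ne_of_gt (Fin.lt_def.mpr (by omega)))

theorem HasLowerBandwidth.mono [Zero α] {A : Matrix (Fin m) (Fin m) α} {a b : ℕ}
    (hA : A.HasLowerBandwidth a) (hab : a ≤ b) : A.HasLowerBandwidth b :=
  fun i j hij => hA i j (by omega)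

theorem HasLowerBandwidth.mul [NonUnitalNonAssocSemiring α] {A B : Matrix (Fin m) (Fin m) α}
    {a b : ℕ} (hA : A.HasLowerBandwidth a) (hB : B.HasLowerBandwidth b) :
    (A * B).HasLowerBandwidth (a + b) := by
  intro i j hij
  rw [mul_apply]
  refine Finset.sum_eq_zero fun k _ => ?_
  by_cases hk : (k : ℕ) + a < i
  · rw [hA i k hk, zero_mul]
  · rw [hB k j (by omega), mul_zero]

theorem HasLowerBandwidth.sub_smul_one [Ring α] {A : Matrix (Fin m) (Fin m) α} {b : ℕ}
    (hA : A.HasLowerBandwidth b) (c : α) : (A - c • 1).HasLowerBandwidth b := by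
  intro i j hij
  rw [sub_apply, hA i j hij, smul_apply, (hasLowerBandwidth_one.mono (Nat.zero_le b)) i j hij,
    smul_zero, sub_zero]

theorem hasLowerBandwidth_list_prod [Semiring α] {L : List (Matrix (Fin m) (Fin m) α)} {b : ℕ}
    (hL : ∀ A ∈ L, A.HasLowerBandwidth b) : L.prod.HasLowerBandwidth (L.length * b) := by
  induction L with
  | nil => exact hasLowerBandwidth_one.mono (Nat.zero_le _)
  | cons A L ih =>
    rw [List.prod_cons, List.length_cons, Nat.succ_mul, add_comm]
    exact (hL A List.mem_cons_self).mul (ih fun B hB => hL B (List.mem_cons_of_mem A hB))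

theorem HasLowerBandwidth.mul_inv_of_blockTriangular [CommRing α]
    {A U : Matrix (Fin m) (Fin m) α} {b : ℕ} (hA : A.HasLowerBandwidth b)
    (hU : U.BlockTriangular id) (hUinv : IsUnit U) : (A * U⁻¹).HasLowerBandwidth b := by
  have : Invertible U := hUinv.invertible
  exact hA.mul (hasLowerBandwidth_zero_iff_blockTriangular.mpr
    (blockTriangular_inv_of_blockTriangular hU))

end Matrix

/-- After p implicit shifted QR steps on an unreduced upper Hessenberg T (p < m), the row
vector e_mᵀ V has its first m−p−1 entries equal to zero, where V is the unitary QR factor of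
(T−μ₁I)⋯(T−μ_pI). -/
theorem stmt4 (m p : ℕ) (hp : p < m) (T : Matrix (Fin m) (Fin m) ℂ)
    (hHess : ∀ i j : Fin m, (j : ℕ) + 1 < i → T i j = 0)
    (μ : Fin p → ℂ) (V R : Matrix (Fin m) (Fin m) ℂ)
    (hR : ∀ i j : Fin m, (j : ℕ) < i → R i j = 0) (hRinv : IsUnit R)
    (hQR : (List.ofFn fun i : Fin p => T - μ i • 1).prod = V * R) :
    ∀ j : Fin m, (j : ℕ) < m - p - 1 → V ⟨m - 1, by omega⟩ j = 0 := by
  have hFactors : ∀ A ∈ List.ofFn (fun i : Fin p => T - μ i • 1), A.HasLowerBandwidth 1 := by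
    simp only [List.mem_ofFn, forall_exists_index, forall_apply_eq_imp_iff]
    exact fun i => HasLowerBandwidth.sub_smul_one hHess (μ i)
  have hProd : (List.ofFn fun i : Fin p => T - μ i • 1).prod.HasLowerBandwidth p := by
    simpa using hasLowerBandwidth_list_prod hFactors
  have hRtri : R.BlockTriangular id := fun i j hij => hR i j hij
  have hVeq : V = (List.ofFn fun i : Fin p => T - μ i • 1).prod * R⁻¹ := by
    rw [hQR, Matrix.mul_assoc, mul_nonsing_inv R ((isUnit_iff_isUnit_det R).mp hRinv), mul_one]
  have hV : V.HasLowerBandwidth p := hVeq ▸ hProd.mul_inv_of_blockTriangular hRtri hRinv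
  exact fun j hj => hV _ j (show (j : ℕ) + p < m - 1 by omega)
end
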